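/- Let s, t ∈ ℝ with 0 ≤ s ≤ 4, t ≤ −1, and s + t ≤ 1. Then for all P, Q ∈ Γ_n with r ≤ p_i/q_i ≤ R for all i: ((r+1)/(2r))^{s−3} (((4−s)r + s)/(4r^{t+2})) Φ_t(P||Q) ≤ ζ_s(Q||P) ≤ ((R+1)/(2R))^{s−3} (((4−s)R + s)/(4R^{t+2})) Φ_t(P||Q). -/

import Mathlib

open Real Finset

/-- Relative information of type `s` (generalized Kullback-Leibler divergence). -/
noncomputable def Phi (n : ℕ) (s : ℝ) (p q : Fin n → ℝ) : ℝ :=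
  if s = 0 then ∑ i, q i * Real.log (q i / p i)
  else if s = 1 then ∑ i, p i * Real.log (p i / q i)
  else (s * (s - 1))⁻¹ * ((∑ i, (p i) ^ s * (q i) ^ (1 - s)) - 1)

/-- Unified relative JS and AG divergence of type `s`. -/
noncomputable def Omega (n : ℕ) (s : ℝ) (p q : Fin n → ℝ) : ℝ :=
  if s = 0 then ∑ i, p i * Real.log (2 * p i / (p i + q i))
  else if s = 1 then ∑ i, ((p i + q i) / 2) * Real.log ((p i + q i) / (2 * p i))
  else (s * (s - 1))⁻¹ * ((∑ i, p i * ((p i + q i) / (2 * p i)) ^ s) - 1)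

/-- Relative J-divergence of type `s`. -/
noncomputable def zeta (n : ℕ) (s : ℝ) (p q : Fin n → ℝ) : ℝ :=
  if s = 1 then ∑ i, (p i - q i) * Real.log ((p i + q i) / (2 * q i))
  else (s - 1)⁻¹ * ∑ i, (p i - q i) * ((p i + q i) / (2 * q i)) ^ (s - 1)

/-!
Both sides are Csiszár divergences `∑ qᵢ f (pᵢ / qᵢ)` with `f 1 = 0`: `Φ_t(P‖Q)` for the generator
`phiGen t` and `ζ_s(Q‖P)` for `zetaGen s`. The ratio of their second derivatives is `eta s t x`,
and `s ∈ [0, 4]`, `t ≤ -1`, `s + t ≤ 1` are what make the numerator of its logarithmic derivative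
nonnegative, so `eta` is nondecreasing. Hence `zetaGen s - eta r * phiGen t` and
`eta R * phiGen t - zetaGen s` are convex on `[r, R]`, and Jensen's inequality at the points
`pᵢ / qᵢ`, whose `q`-mean is `1`, makes their Csiszár divergences nonnegative.
-/

section CsiszarDivergence

variable {ι : Type*} [Fintype ι]

noncomputable def csiszarDiv (φ : ℝ → ℝ) (p q : ι → ℝ) : ℝ := ∑ i, q i * φ (p i / q i)

lemma csiszarDiv_sub (φ ψ : ℝ → ℝ) (p q : ι → ℝ) :
    csiszarDiv (fun x => φ x - ψ x) p q = csiszarDiv φ p q - csiszarDiv ψ p q := by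
  simp only [csiszarDiv, mul_sub, Finset.sum_sub_distrib]

lemma csiszarDiv_const_mul (c : ℝ) (φ : ℝ → ℝ) (p q : ι → ℝ) :
    csiszarDiv (fun x => c * φ x) p q = c * csiszarDiv φ p q := by
  simp only [csiszarDiv, Finset.mul_sum, mul_left_comm]

lemma csiszarDiv_nonneg {φ : ℝ → ℝ} {S : Set ℝ} (hφ : ConvexOn ℝ S φ) (hφ1 : φ 1 = 0)
    {p q : ι → ℝ} (hq : ∀ i, 0 < q i) (hp1 : ∑ i, p i = 1) (hq1 : ∑ i, q i = 1)
    (hS : ∀ i, p i / q i ∈ S) : 0 ≤ csiszarDiv φ p q := by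
  have hmean : ∑ i, q i • (p i / q i) = 1 := by
    simpa only [smul_eq_mul, mul_div_cancel₀ _ (hq _).ne'] using hp1
  have hJensen := hφ.map_sum_le (fun i _ => (hq i).le) hq1 (fun i _ => hS i)
  rwa [hmean, hφ1] at hJensen

lemma csiszarDiv_le_of_deriv2_le {F F' F'' G G' G'' : ℝ → ℝ} {a b : ℝ}
    (hF : ∀ x ∈ Set.Icc a b, HasDerivAt F (F' x) x)
    (hF' : ∀ x ∈ Set.Ioo a b, HasDerivAt F' (F'' x) x)
    (hG : ∀ x ∈ Set.Icc a b, HasDerivAt G (G' x) x)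
    (hG' : ∀ x ∈ Set.Ioo a b, HasDerivAt G' (G'' x) x)
    (hle : ∀ x ∈ Set.Ioo a b, F'' x ≤ G'' x) (h1 : F 1 = G 1)
    {p q : ι → ℝ} (hq : ∀ i, 0 < q i) (hp1 : ∑ i, p i = 1) (hq1 : ∑ i, q i = 1)
    (hpq : ∀ i, p i / q i ∈ Set.Icc a b) : csiszarDiv F p q ≤ csiszarDiv G p q := by
  have hconv : ConvexOn ℝ (Set.Icc a b) (fun x => G x - F x) := by
    refine convexOn_of_hasDerivWithinAt2_nonneg (convex_Icc a b)
      (f' := fun x => G' x - F' x) (f'' := fun x => G'' x - F'' x)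
      (fun x hx => ((hG x hx).sub (hF x hx)).continuousAt.continuousWithinAt) ?_ ?_ ?_ <;>
      rw [interior_Icc]
    · exact fun x hx => ((hG x (Set.Ioo_subset_Icc_self hx)).sub
        (hF x (Set.Ioo_subset_Icc_self hx))).hasDerivWithinAt
    · exact fun x hx => ((hG' x hx).sub (hF' x hx)).hasDerivWithinAt
    · exact fun x hx => sub_nonneg.2 (hle x hx)
  have := csiszarDiv_nonneg hconv (sub_eq_zero.2 h1.symm) hq hp1 hq1 hpq
  rw [csiszarDiv_sub] at this
  linarith

theorem csiszarDiv_bounds_of_deriv2 {f f' f'' g g' g'' : ℝ → ℝ} {a b m M : ℝ}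
    (hf : ∀ x ∈ Set.Icc a b, HasDerivAt f (f' x) x)
    (hf' : ∀ x ∈ Set.Ioo a b, HasDerivAt f' (f'' x) x)
    (hg : ∀ x ∈ Set.Icc a b, HasDerivAt g (g' x) x)
    (hg' : ∀ x ∈ Set.Ioo a b, HasDerivAt g' (g'' x) x)
    (hm : ∀ x ∈ Set.Ioo a b, m * f'' x ≤ g'' x) (hM : ∀ x ∈ Set.Ioo a b, g'' x ≤ M * f'' x)
    (hf1 : f 1 = 0) (hg1 : g 1 = 0)
    {p q : ι → ℝ} (hq : ∀ i, 0 < q i) (hp1 : ∑ i, p i = 1) (hq1 : ∑ i, q i = 1)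
    (hpq : ∀ i, p i / q i ∈ Set.Icc a b) :
    m * csiszarDiv f p q ≤ csiszarDiv g p q ∧ csiszarDiv g p q ≤ M * csiszarDiv f p q := by
  rw [← csiszarDiv_const_mul, ← csiszarDiv_const_mul]
  constructor
  · exact csiszarDiv_le_of_deriv2_le (fun x hx => (hf x hx).const_mul m)
      (fun x hx => (hf' x hx).const_mul m) hg hg' hm (by rw [hf1, hg1, mul_zero]) hq hp1 hq1 hpq
  · exact csiszarDiv_le_of_deriv2_le hg hg' (fun x hx => (hf x hx).const_mul M)
      (fun x hx => (hf' x hx).const_mul M) hM (by rw [hf1, hg1, mul_zero]) hq hp1 hq1 hpq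

end CsiszarDivergence

-- An antiderivative of `y ^ (a - 1)` on `(0, ∞)`, for every real `a`.
noncomputable def powLog (a y : ℝ) : ℝ := if a = 0 then log y else a⁻¹ * y ^ a

lemma hasDerivAt_powLog (a : ℝ) {y : ℝ} (hy : 0 < y) : HasDerivAt (powLog a) (y ^ (a - 1)) y := by
  by_cases ha : a = 0
  · have : powLog a = log := funext fun z => if_pos ha
    rw [this, ha, zero_sub, rpow_neg_one]
    exact hasDerivAt_log hy.ne'
  · have : powLog a = fun z => a⁻¹ * z ^ a := funext fun z => if_neg ha
    rw [this]
    refine ((hasDerivAt_rpow_const (p := a) (Or.inl hy.ne')).const_mul a⁻¹).congr_deriv ?_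
    field_simp

lemma hasDerivAt_midRatio {x : ℝ} (hx : 0 < x) :
    HasDerivAt (fun y => (y + 1) / (2 * y)) (-(2 * x ^ 2)⁻¹) x := by
  refine (((hasDerivAt_id x).add_const 1).div ((hasDerivAt_id x).const_mul 2)
    (by positivity)).congr_deriv ?_
  simp only [id]
  field_simp
  ring

noncomputable def phiGen (t x : ℝ) : ℝ := (t * (t - 1))⁻¹ * (x ^ t - 1)

noncomputable def zetaGen (s x : ℝ) : ℝ := (1 - x) * powLog (s - 1) ((x + 1) / (2 * x))

lemma hasDerivAt_phiGen {t x : ℝ} (ht0 : t ≠ 0) (ht1 : t ≠ 1) (hx : 0 < x) :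
    HasDerivAt (phiGen t) ((t - 1)⁻¹ * x ^ (t - 1)) x := by
  refine (((hasDerivAt_rpow_const (p := t) (Or.inl hx.ne')).sub_const 1).const_mul
    (t * (t - 1))⁻¹).congr_deriv ?_
  have : t - 1 ≠ 0 := sub_ne_zero.2 ht1
  field_simp

lemma hasDerivAt_phiGen_deriv {t x : ℝ} (ht1 : t ≠ 1) (hx : 0 < x) :
    HasDerivAt (fun y => (t - 1)⁻¹ * y ^ (t - 1)) (x ^ (t - 2)) x := by
  refine ((hasDerivAt_rpow_const (p := t - 1) (Or.inl hx.ne')).const_mul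
    (t - 1)⁻¹).congr_deriv ?_
  have : t - 1 ≠ 0 := sub_ne_zero.2 ht1
  rw [sub_sub, one_add_one_eq_two]
  field_simp

lemma hasDerivAt_zetaGen (s : ℝ) {x : ℝ} (hx : 0 < x) :
    HasDerivAt (zetaGen s)
      ((x - 1) / (2 * x ^ 2) * ((x + 1) / (2 * x)) ^ (s - 2) - powLog (s - 1) ((x + 1) / (2 * x)))
      x := by
  have hlog := (hasDerivAt_powLog (s - 1) (by positivity : 0 < (x + 1) / (2 * x))).comp x
    (hasDerivAt_midRatio hx)
  refine (((hasDerivAt_id x).const_sub 1).mul hlog).congr_deriv ?_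
  rw [sub_sub, one_add_one_eq_two]
  simp only [id, Function.comp_apply]
  field_simp
  ring

lemma hasDerivAt_zetaGen_deriv (s : ℝ) {x : ℝ} (hx : 0 < x) :
    HasDerivAt
      (fun y => (y - 1) / (2 * y ^ 2) * ((y + 1) / (2 * y)) ^ (s - 2)
        - powLog (s - 1) ((y + 1) / (2 * y)))
      (((x + 1) / (2 * x)) ^ (s - 3) * (((4 - s) * x + s) / (4 * x ^ 4))) x := by
  have hφ : 0 < (x + 1) / (2 * x) := by positivity
  have hk : HasDerivAt (fun y => (y - 1) / (2 * y ^ 2)) ((2 - x) / (2 * x ^ 3)) x := by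
    refine (((hasDerivAt_id x).sub_const 1).div ((hasDerivAt_pow 2 x).const_mul 2)
      (by positivity)).congr_deriv ?_
    simp only [id]
    field_simp
    ring
  have hpow := (hasDerivAt_midRatio hx).rpow_const (p := s - 2) (Or.inl hφ.ne')
  have hlog := (hasDerivAt_powLog (s - 1) hφ).comp x (hasDerivAt_midRatio hx)
  refine ((hk.mul hpow).sub hlog).congr_deriv ?_
  rw [show s - 2 - 1 = s - 3 by ring, show s - 1 - 1 = s - 3 + 1 by ring,
    show s - 2 = s - 3 + 1 by ring, rpow_add_one hφ.ne']
  field_simp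
  ring

noncomputable def eta (s t x : ℝ) : ℝ :=
  ((x + 1) / (2 * x)) ^ (s - 3) * (((4 - s) * x + s) / (4 * x ^ (t + 2)))

section Eta

variable {s t : ℝ}

lemma eta_mul_rpow {x : ℝ} (hx : 0 < x) :
    eta s t x * x ^ (t - 2)
      = ((x + 1) / (2 * x)) ^ (s - 3) * (((4 - s) * x + s) / (4 * x ^ 4)) := by
  have hsplit : x ^ (t + 2) = x ^ (t - 2) * x ^ 4 := by
    rw [← rpow_natCast, ← rpow_add hx]
    norm_num
    ring_nf
  have := (rpow_pos_of_pos hx (t - 2)).ne'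
  rw [eta, hsplit]
  field_simp

lemma four_sub_mul_add_pos (hs0 : 0 ≤ s) (hs4 : s ≤ 4) {x : ℝ} (hx : 0 < x) :
    0 < (4 - s) * x + s := by
  rcases hs0.eq_or_lt with rfl | hs
  · linarith
  · nlinarith

lemma log_eta (hs0 : 0 ≤ s) (hs4 : s ≤ 4) {x : ℝ} (hx : 0 < x) :
    log (eta s t x) = (s - 3) * log ((x + 1) / (2 * x)) + log ((4 - s) * x + s) - log 4
      - (t + 2) * log x := by
  have hB := four_sub_mul_add_pos hs0 hs4 hx
  rw [eta, log_mul (by positivity) (by positivity), log_div hB.ne' (by positivity),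
    log_mul (by norm_num) (by positivity), log_rpow (by positivity), log_rpow hx]
  ring

lemma eta_pos (hs0 : 0 ≤ s) (hs4 : s ≤ 4) {x : ℝ} (hx : 0 < x) : 0 < eta s t x := by
  have := four_sub_mul_add_pos hs0 hs4 hx
  unfold eta
  positivity

lemma eta_log_deriv_numerator_nonneg (hs0 : 0 ≤ s) (hs4 : s ≤ 4) (ht : t ≤ -1) (hst : s + t ≤ 1)
    {x : ℝ} (hx : 0 < x) :
    0 ≤ (3 - s) * ((4 - s) * x + s) + (4 - s) * (x * (x + 1))
      - (t + 2) * ((x + 1) * ((4 - s) * x + s)) := by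
  -- With `B = (4 - s) x + s`, the left side equals both
  -- `(2 - s)((6 - s) x + s) + (-1 - t)(x + 1) B` and
  -- `(s - 2) x ((4 - s) x + s - 2) + (1 - s - t)(x + 1) B`: use the first if `s ≤ 2`.
  have hB := four_sub_mul_add_pos hs0 hs4 hx
  have hxB : 0 ≤ (x + 1) * ((4 - s) * x + s) := by positivity
  rcases le_total s 2 with hs2 | hs2
  · nlinarith [mul_nonneg (by linarith : 0 ≤ -1 - t) hxB,
      mul_nonneg (by linarith : 0 ≤ 2 - s) (by nlinarith : 0 ≤ (6 - s) * x + s)]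
  · nlinarith [mul_nonneg (by linarith : 0 ≤ 1 - s - t) hxB,
      mul_nonneg (mul_nonneg (by linarith : 0 ≤ s - 2) hx.le)
        (by nlinarith : 0 ≤ (4 - s) * x + (s - 2))]

lemma monotoneOn_eta (hs0 : 0 ≤ s) (hs4 : s ≤ 4) (ht : t ≤ -1) (hst : s + t ≤ 1) :
    MonotoneOn (eta s t) (Set.Ioi 0) := by
  set ψ : ℝ → ℝ := fun x => (s - 3) * log ((x + 1) / (2 * x)) + log ((4 - s) * x + s) - log 4
      - (t + 2) * log x
  have hψ : ∀ x > 0, HasDerivAt ψ ((s - 3) * (-(2 * x ^ 2)⁻¹ / ((x + 1) / (2 * x)))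
      + (4 - s) / ((4 - s) * x + s) - (t + 2) * x⁻¹) x := fun x hx =>
    (((((hasDerivAt_midRatio hx).log (by positivity)).const_mul (s - 3)).add
      ((((hasDerivAt_id x).const_mul (4 - s)).add_const s).log
        (four_sub_mul_add_pos hs0 hs4 hx).ne' |>.congr_deriv (by simp))).sub_const _).sub
      ((hasDerivAt_log hx.ne').const_mul (t + 2))
  have hψ_mono : MonotoneOn ψ (Set.Ioi 0) := by
    refine monotoneOn_of_deriv_nonneg (convex_Ioi 0)
      (fun x hx => (hψ x hx).continuousAt.continuousWithinAt) ?_ ?_ <;> rw [interior_Ioi]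
    · exact fun x hx => (hψ x hx).differentiableAt.differentiableWithinAt
    · intro x hx
      have hB := four_sub_mul_add_pos hs0 hs4 hx
      have hx : 0 < x := hx
      have hD : 0 < x * (x + 1) * ((4 - s) * x + s) := by positivity
      rw [(hψ x hx).deriv]
      refine (mul_nonneg_iff_of_pos_right hD).1
        ((eta_log_deriv_numerator_nonneg hs0 hs4 ht hst hx).trans_eq ?_)
      field_simp
      ring
  intro a ha b hb hab
  rw [← log_le_log_iff (eta_pos hs0 hs4 ha) (eta_pos hs0 hs4 hb), log_eta hs0 hs4 ha,
    log_eta hs0 hs4 hb]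
  exact hψ_mono ha hb hab

end Eta

lemma Phi_eq_csiszarDiv {n : ℕ} {t : ℝ} (ht0 : t ≠ 0) (ht1 : t ≠ 1) {p q : Fin n → ℝ}
    (hp : ∀ i, 0 < p i) (hq : ∀ i, 0 < q i) (hq1 : ∑ i, q i = 1) :
    Phi n t p q = csiszarDiv (phiGen t) p q := by
  have hterm : ∀ i,
      q i * phiGen t (p i / q i) = (t * (t - 1))⁻¹ * (p i ^ t * q i ^ (1 - t) - q i) := by
    intro i
    have := (rpow_pos_of_pos (hq i) t).ne'
    rw [phiGen, div_rpow (hp i).le (hq i).le, rpow_sub (hq i), rpow_one]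
    field_simp
  rw [Phi, if_neg ht0, if_neg ht1, csiszarDiv, Finset.sum_congr rfl fun i _ => hterm i,
    ← Finset.mul_sum, Finset.sum_sub_distrib, hq1]

lemma zeta_swap_eq_csiszarDiv {n : ℕ} (s : ℝ) {p q : Fin n → ℝ} (hp : ∀ i, 0 < p i)
    (hq : ∀ i, 0 < q i) : zeta n s q p = csiszarDiv (zetaGen s) p q := by
  have hterm : ∀ i, q i * zetaGen s (p i / q i)
      = (q i - p i) * powLog (s - 1) ((q i + p i) / (2 * p i)) := by
    intro i
    have := (hp i).ne'
    have := (hq i).ne'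
    rw [zetaGen, show (p i / q i + 1) / (2 * (p i / q i)) = (q i + p i) / (2 * p i) by
      field_simp; ring]
    field_simp
  simp only [csiszarDiv, hterm, powLog, zeta, sub_eq_zero]
  split_ifs
  · rfl
  · rw [Finset.mul_sum]
    exact Finset.sum_congr rfl fun i _ => by ring

theorem stmt_9_general (s t : ℝ) (hs0 : 0 ≤ s) (hs4 : s ≤ 4) (ht : t ≤ -1) (hst : s + t ≤ 1)
    (n : ℕ) (p q : Fin n → ℝ)
    (hp : ∀ i, 0 < p i) (hq : ∀ i, 0 < q i)
    (hp1 : ∑ i, p i = 1) (hq1 : ∑ i, q i = 1)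
    (r R : ℝ) (hr : 0 < r)
    (hbound : ∀ i, r ≤ p i / q i ∧ p i / q i ≤ R) :
    ((r + 1) / (2 * r)) ^ (s - 3) * (((4 - s) * r + s) / (4 * r ^ (t + 2))) * Phi n t p q ≤ zeta n s q p ∧
      zeta n s q p ≤ ((R + 1) / (2 * R)) ^ (s - 3) * (((4 - s) * R + s) / (4 * R ^ (t + 2))) * Phi n t p q := by
  have ht0 : t ≠ 0 := by linarith
  have ht1 : t ≠ 1 := by linarith
  have hpos : ∀ x ∈ Set.Icc r R, 0 < x := fun x hx => hr.trans_le hx.1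
  have hη := monotoneOn_eta hs0 hs4 ht hst
  rw [zeta_swap_eq_csiszarDiv s hp hq, Phi_eq_csiszarDiv ht0 ht1 hp hq hq1]
  refine csiszarDiv_bounds_of_deriv2
    (fun x hx => hasDerivAt_phiGen ht0 ht1 (hpos x hx))
    (fun x hx => hasDerivAt_phiGen_deriv ht1 (hpos x (Set.Ioo_subset_Icc_self hx)))
    (fun x hx => hasDerivAt_zetaGen s (hpos x hx))
    (fun x hx => hasDerivAt_zetaGen_deriv s (hpos x (Set.Ioo_subset_Icc_self hx)))
    (fun x hx => ?_) (fun x hx => ?_) (by simp [phiGen]) (by simp [zetaGen]) hq hp1 hq1 hbound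
  all_goals
    have hx0 : 0 < x := hr.trans hx.1
    rw [← eta_mul_rpow hx0]
    refine mul_le_mul_of_nonneg_right ?_ (rpow_nonneg hx0.le _)
  · exact hη hr hx0 hx.1.le
  · exact hη hx0 (hx0.trans hx.2) hx.2.le

theorem stmt_9 (s t : ℝ) (hs0 : 0 ≤ s) (hs4 : s ≤ 4) (ht : t ≤ -1) (hst : s + t ≤ 1)
    (n : ℕ) (hn : 2 ≤ n) (p q : Fin n → ℝ)
    (hp : ∀ i, 0 < p i) (hq : ∀ i, 0 < q i)
    (hp1 : ∑ i, p i = 1) (hq1 : ∑ i, q i = 1)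
    (r R : ℝ) (hr : 0 < r) (hrR : r ≤ R)
    (hbound : ∀ i, r ≤ p i / q i ∧ p i / q i ≤ R) :
    ((r + 1) / (2 * r)) ^ (s - 3) * (((4 - s) * r + s) / (4 * r ^ (t + 2))) * Phi n t p q ≤ zeta n s q p ∧
      zeta n s q p ≤ ((R + 1) / (2 * R)) ^ (s - 3) * (((4 - s) * R + s) / (4 * R ^ (t + 2))) * Phi n t p q :=
  stmt_9_general s t hs0 hs4 ht hst n p q hp hq hp1 hq1 r R hr hbound
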